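/- Let 0 < ν < 1, β = ν²/(1−ν²), γ = ν/(1−ν²), r_T, ρ_T, ρ_A > 0, R = r_T + ρ_T. Suppose τ satisfies ν·ρ_A/(1 − ν) ≤ ν·τ ≤ R (i.e., τ ≥ τ₄* := ρ_A/(1−ν) and R − ντ ≥ 0). Then for every angle θ and every entry angle θ_A0, the Apollonius-circle center x_C = (R − ν·τ)·û(θ_A0) − β·ρ_A·û(θ) satisfies ‖x_C‖ + γ·ρ_A ≤ R. -/

import Mathlib

/-!
By the triangle inequality `‖x_C‖ ≤ (R - ντ) + βρ_A`, and `β + γ = ν/(1 - ν)` because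
`1 - ν²` factors as `(1 - ν)(1 + ν)`. Hence `‖x_C‖ + γρ_A ≤ R - ντ + νρ_A/(1 - ν)`, which is at
most `R` once `τ ≥ τ₄*`.
-/

open Real

noncomputable def uhat (θ : ℝ) : EuclideanSpace ℝ (Fin 2) :=
  WithLp.toLp 2 ![Real.cos θ, Real.sin θ]

lemma norm_uhat (θ : ℝ) : ‖uhat θ‖ = 1 := by
  simp [uhat, EuclideanSpace.norm_eq, Fin.sum_univ_two]

lemma norm_smul_sub_smul_le_of_norm_eq_one {E : Type*} [SeminormedAddCommGroup E]
    [NormedSpace ℝ E] {u v : E} (hu : ‖u‖ = 1) (hv : ‖v‖ = 1) (a b : ℝ) :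
    ‖a • u - b • v‖ ≤ |a| + |b| :=
  calc ‖a • u - b • v‖ ≤ ‖a • u‖ + ‖b • v‖ := norm_sub_le _ _
    _ = |a| + |b| := by
      rw [norm_smul, norm_smul, hu, hv, mul_one, mul_one, norm_eq_abs, norm_eq_abs]

lemma sq_div_one_sub_sq_add_div_one_sub_sq {ν : ℝ} (hν : 1 + ν ≠ 0) :
    ν ^ 2 / (1 - ν ^ 2) + ν / (1 - ν ^ 2) = ν / (1 - ν) := by
  rw [← add_div, show 1 - ν ^ 2 = (1 - ν) * (1 + ν) by ring, show ν ^ 2 + ν = ν * (1 + ν) by ring,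
    mul_div_mul_right _ _ hν]

theorem no_escape_after_critical_time_tau4_general
    (ν ρ_A τ : ℝ) (hν0 : 0 < ν) (hν1 : ν < 1)
    (hρA : 0 < ρ_A)
    (R β γ : ℝ)
    (hβ : β = ν ^ 2 / (1 - ν ^ 2)) (hγ : γ = ν / (1 - ν ^ 2))
    (hτ : ν * ρ_A / (1 - ν) ≤ ν * τ) (hτR : ν * τ ≤ R) :
    ∀ θ θ_A0 : ℝ,
      ‖((R - ν * τ) • uhat θ_A0 - (β * ρ_A) • uhat θ : EuclideanSpace ℝ (Fin 2))‖ +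
        γ * ρ_A ≤ R := by
  intro θ θ_A0
  have hβρ : 0 ≤ β * ρ_A := by
    have : 0 < 1 - ν ^ 2 := by nlinarith
    rw [hβ]; positivity
  have hβγ : (β + γ) * ρ_A ≤ ν * τ := by
    rwa [hβ, hγ, sq_div_one_sub_sq_add_div_one_sub_sq (by linarith), div_mul_eq_mul_div]
  calc _ ≤ |R - ν * τ| + |β * ρ_A| + γ * ρ_A := by
        gcongr; exact norm_smul_sub_smul_le_of_norm_eq_one (norm_uhat _) (norm_uhat _) _ _
    _ = R - ν * τ + β * ρ_A + γ * ρ_A := by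
        rw [abs_of_nonneg (sub_nonneg.mpr hτR), abs_of_nonneg hβρ]
    _ ≤ R := by linarith

/-- If engagement begins no earlier than the critical time `τ₄* = ρ_A/(1−ν)`
(equivalently `νρ_A/(1−ν) ≤ ντ`) while `ντ ≤ R`, then for every engagement angle `θ`
and every entry angle `θ_A0`, the Apollonius-circle center
`x_C = (R − ντ)û(θ_A0) − βρ_A û(θ)` satisfies `‖x_C‖ + γρ_A ≤ R`: the Apollonius
circle lies entirely in the disk of radius `R`, so the attacker cannot escape. -/
theorem no_escape_after_critical_time_tau4
    (ν r_T ρ_T ρ_A τ : ℝ) (hν0 : 0 < ν) (hν1 : ν < 1)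
    (hrT : 0 < r_T) (hρT : 0 < ρ_T) (hρA : 0 < ρ_A)
    (R β γ : ℝ) (hR : R = r_T + ρ_T)
    (hβ : β = ν ^ 2 / (1 - ν ^ 2)) (hγ : γ = ν / (1 - ν ^ 2))
    (hτ : ν * ρ_A / (1 - ν) ≤ ν * τ) (hτR : ν * τ ≤ R) :
    ∀ θ θ_A0 : ℝ,
      ‖((R - ν * τ) • uhat θ_A0 - (β * ρ_A) • uhat θ : EuclideanSpace ℝ (Fin 2))‖ +
        γ * ρ_A ≤ R :=
  no_escape_after_critical_time_tau4_general ν ρ_A τ hν0 hν1 hρA R β γ hβ hγ hτ hτR
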